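/- arXiv:2511.23242 — 2 statements merged into one kernel-verified Lean document; each statement's English description precedes it below -/
import Mathlib

section
/- For every integer $\ell \ge 0$ and all $\tau, r > 0$, the function $\psi(\tau, r) = \frac{r^{\ell+1}}{\tau^{\ell+1}(\tau+r)^{\ell+1}}$ satisfies the identity $(r^2\partial_r)^{\ell+1}\psi(\tau, r) = \frac{(2\ell+1)!}{\ell!}\left(\frac{r}{\tau+r}\right)^{2\ell+2}$, where $\partial_r$ is the partial derivative in $r$ at fixed $\tau$, and $(r^2\partial_r)^{\ell+1}$ denotes the $(\ell+1)$-fold composition of the operator $f \mapsto r^2\,\partial_r f$. -/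
/-!
With `g(r) = r / (τ + r)` one has `r² ∂_r g = τ g²`, hence `r² ∂_r (gⁿ) = n τ gⁿ⁺¹`. Since
`ψ = τ^{-(ℓ+1)} g^{ℓ+1}`, applying the operator `ℓ + 1` times multiplies the coefficient by
`τ^{ℓ+1} (ℓ+1)(ℓ+2)⋯(2ℓ+1) = τ^{ℓ+1} (2ℓ+1)!/ℓ!` and raises the power of `g` to `2ℓ + 2`.
-/

noncomputable def sqMulDeriv (f : ℝ → ℝ) : ℝ → ℝ := fun s => s ^ 2 * deriv f s

lemma hasDerivAt_div_add_self {τ x : ℝ} (hx : τ + x ≠ 0) :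
    HasDerivAt (fun y => y / (τ + y)) (τ / (τ + x) ^ 2) x :=
  ((hasDerivAt_id' x).div ((hasDerivAt_id' x).const_add τ) hx).congr_deriv (by ring)

lemma sqMulDeriv_const_mul_div_add_self_pow (c τ : ℝ) (n : ℕ) {x : ℝ} (hx : τ + x ≠ 0) :
    sqMulDeriv (fun y => c * (y / (τ + y)) ^ n) x = c * n * τ * (x / (τ + x)) ^ (n + 1) := by
  have hd : HasDerivAt (fun y => c * (y / (τ + y)) ^ n)
      (c * (n * (x / (τ + x)) ^ (n - 1) * (τ / (τ + x) ^ 2))) x :=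
    ((hasDerivAt_div_add_self hx).pow n).const_mul c
  rw [sqMulDeriv, hd.deriv]
  rcases n with _ | n
  · simp
  · rw [Nat.add_sub_cancel]
    calc _ = c * (n + 1 : ℕ) * τ * (x / (τ + x)) ^ n * (x ^ 2 / (τ + x) ^ 2) := by ring
      _ = _ := by rw [← div_pow]; ring

lemma iterate_sqMulDeriv_const_mul_div_add_self_pow (c τ : ℝ) (n k : ℕ) {x : ℝ}
    (hx : τ + x ≠ 0) :
    (sqMulDeriv^[k] fun y => c * (y / (τ + y)) ^ n) x
      = c * τ ^ k * n.ascFactorial k * (x / (τ + x)) ^ (n + k) := by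
  induction k generalizing x with
  | zero => simp
  | succ k ih =>
    have hk : (sqMulDeriv^[k] fun y => c * (y / (τ + y)) ^ n)
        =ᶠ[nhds x] fun y => c * τ ^ k * n.ascFactorial k * (y / (τ + y)) ^ (n + k) := by
      filter_upwards [(isOpen_ne_fun (continuous_const_add τ) continuous_const).mem_nhds hx]
        with y hy using ih hy
    rw [Function.iterate_succ_apply', sqMulDeriv, hk.deriv_eq, ← sqMulDeriv,
      sqMulDeriv_const_mul_div_add_self_pow _ _ _ hx, Nat.ascFactorial_succ]
    push_cast
    ring

/-- For `ψ(τ,r) = r^{ℓ+1}/(τ^{ℓ+1}(τ+r)^{ℓ+1})` and `τ, r > 0`,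
`(r²∂_r)^{ℓ+1} ψ = ((2ℓ+1)!/ℓ!) (r/(τ+r))^{2ℓ+2}`. -/
theorem stmt6 (ℓ : ℕ) (τ r : ℝ) (hτ : 0 < τ) (hr : 0 < r) :
    ((fun f : ℝ → ℝ => fun s : ℝ => s ^ 2 * deriv f s)^[ℓ + 1]
        (fun s : ℝ => s ^ (ℓ + 1) / (τ ^ (ℓ + 1) * (τ + s) ^ (ℓ + 1)))) r
      = ((Nat.factorial (2 * ℓ + 1) : ℝ) / (Nat.factorial ℓ : ℝ))
          * (r / (τ + r)) ^ (2 * ℓ + 2) := by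
  have hψ : (fun s : ℝ => s ^ (ℓ + 1) / (τ ^ (ℓ + 1) * (τ + s) ^ (ℓ + 1)))
      = fun s => (τ ^ (ℓ + 1))⁻¹ * (s / (τ + s)) ^ (ℓ + 1) := by
    funext s
    rw [div_pow, div_mul_eq_div_div_swap, div_eq_inv_mul]
  have hasc :
      ((ℓ + 1).ascFactorial (ℓ + 1) : ℝ) = Nat.factorial (2 * ℓ + 1) / Nat.factorial ℓ := by
    rw [eq_div_iff (by positivity), mul_comm, ← Nat.cast_mul, Nat.factorial_mul_ascFactorial,
      two_mul, add_assoc]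
  change (sqMulDeriv^[ℓ + 1] _) r = _
  rw [hψ, iterate_sqMulDeriv_const_mul_div_add_self_pow _ _ _ _ (by positivity), hasc,
    inv_mul_cancel₀ (by positivity), one_mul]
  ring
end

section
/- Let $M > 0$, $D(r) = 1-2M/r$, and suppose $C_0, C_1 \in \mathbb{R}$ and $\gamma \in (1, 2]$. If a smooth function $h:(R_0,\infty)\to\mathbb{R}$ with $\lim_{r\to\infty} h(r) = 0$ satisfies $r^2 D(r)\,h'(r) = C_0 + C_1/r + O(r^{-\gamma})$ as $r\to\infty$, then $h'(r) = C_0 r^{-2} + (C_1 + 2MC_0)r^{-3} + O(r^{-\gamma-2})$, $h(r) = -C_0 r^{-1} - \tfrac{1}{2}(C_1+2MC_0)r^{-2} + O(r^{-\gamma-1})$, and $r^2\,\frac{d}{dr}\big(r\,h(r)\big) = \tfrac{1}{2}(C_1+2MC_0) + O(r^{1-\gamma})$ as $r\to\infty$. -/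
open Filter Asymptotics

lemma rpow_neg_nat' (r : ℝ) (hr : 0 < r) (n : ℕ) : r ^ (-(n:ℝ)) = (r ^ n)⁻¹ := by
  rw [Real.rpow_neg hr.le, Real.rpow_natCast]

lemma decay_of_deriv' (p R C : ℝ) (hp : 1 < p) (hR : 0 < R) (hC : 0 ≤ C)
    (e e' : ℝ → ℝ)
    (hd : ∀ r ∈ Set.Ioi R, HasDerivAt e (e' r) r)
    (hc : ContinuousOn e' (Set.Ioi R))
    (hlim : Filter.Tendsto e atTop (nhds 0))
    (hb : ∀ r ∈ Set.Ioi R, |e' r| ≤ C * r ^ (-p)) :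
    ∀ r ∈ Set.Ioi R, |e r| ≤ (C / (p - 1)) * r ^ (1 - p) := by
  intro r hr
  have hr0 : 0 < r := hR.trans hr
  have hp1 : (0:ℝ) < p - 1 := by linarith
  have key : ∀ t, r ≤ t → |e r - e t| ≤ C / (p - 1) * r ^ (1 - p) := by
    intro t ht
    have ht0 : 0 < t := lt_of_lt_of_le hr0 ht
    have hsub : Set.uIcc r t ⊆ Set.Ioi R := by
      rw [Set.uIcc_of_le ht]
      exact fun x hx => lt_of_lt_of_le hr hx.1
    have hint : IntervalIntegrable e' MeasureTheory.volume r t :=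
      (hc.mono hsub).intervalIntegrable
    have hftc : ∫ y in r..t, e' y = e t - e r :=
      intervalIntegral.integral_eq_sub_of_hasDerivAt (fun x hx => hd x (hsub hx)) hint
    have hint2 : IntervalIntegrable (fun x => C * x ^ (-p)) MeasureTheory.volume r t := by
      apply ContinuousOn.intervalIntegrable
      apply ContinuousOn.mul continuousOn_const
      intro x hx
      have hx0 : 0 < x := lt_of_lt_of_le hr0 (by rw [Set.uIcc_of_le ht] at hx; exact hx.1)
      exact (Real.continuousAt_rpow_const x (-p) (Or.inl hx0.ne')).continuousWithinAt
    have h1 := intervalIntegral.norm_integral_le_integral_norm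
      (f := e') (μ := MeasureTheory.volume) ht
    rw [hftc] at h1
    simp only [Real.norm_eq_abs] at h1
    have h2 : ∫ y in r..t, |e' y| ≤ ∫ y in r..t, C * y ^ (-p) := by
      apply intervalIntegral.integral_mono_on ht hint.abs hint2
      intro x hx
      exact hb x (lt_of_lt_of_le hr hx.1)
    have h3 : ∫ y in r..t, C * y ^ (-p) = C * ((t ^ (-p + 1) - r ^ (-p + 1)) / (-p + 1)) := by
      rw [intervalIntegral.integral_const_mul, integral_rpow]
      right
      refine ⟨by linarith, ?_⟩
      rw [Set.uIcc_of_le ht]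
      intro hmem
      exact absurd hmem.1 (not_le.2 hr0)
    have htp : (0:ℝ) ≤ t ^ (1 - p) := (Real.rpow_pos_of_pos ht0 _).le
    have h4 : C * ((t ^ (-p + 1) - r ^ (-p + 1)) / (-p + 1)) ≤ C / (p - 1) * r ^ (1 - p) := by
      have ha : (-p + 1 : ℝ) = 1 - p := by ring
      rw [ha]
      have heq : (t ^ (1 - p) - r ^ (1 - p)) / (1 - p)
          = (r ^ (1 - p) - t ^ (1 - p)) / (p - 1) := by
        have h1p : (1 - p : ℝ) ≠ 0 := by linarith
        field_simp
        ring
      rw [heq]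
      calc C * ((r ^ (1 - p) - t ^ (1 - p)) / (p - 1)) ≤ C * (r ^ (1 - p) / (p - 1)) := by
            gcongr
            exact sub_le_self _ htp
        _ = C / (p - 1) * r ^ (1 - p) := by ring
    calc |e r - e t| = |e t - e r| := abs_sub_comm _ _
      _ ≤ _ := h1.trans (h2.trans (le_of_eq h3 |>.trans h4))
  have h5 : Filter.Tendsto (fun t => |e r - e t|) atTop (nhds |e r|) := by
    have : Filter.Tendsto (fun t => e r - e t) atTop (nhds (e r - 0)) :=
      tendsto_const_nhds.sub hlim
    simpa using this.abs
  exact le_of_tendsto h5 (Filter.eventually_atTop.2 ⟨r, key⟩)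

/-- Asymptotic bootstrap: if `h` is smooth on `(R₀,∞)`, `h → 0` at infinity, and
`r² D h' = C₀ + C₁/r + O(r^{-γ})` with `D = 1-2M/r` and `γ ∈ (1,2]`, then
`h' = C₀ r⁻² + (C₁+2MC₀) r⁻³ + O(r^{-γ-2})`,
`h = -C₀ r⁻¹ - ½(C₁+2MC₀) r⁻² + O(r^{-γ-1})`, and
`r² (r h)' = ½(C₁+2MC₀) + O(r^{1-γ})`. -/
theorem stmt16 (M R0 C0 C1 γ : ℝ) (hM : 0 < M) (hR0 : 2 * M < R0)
    (hγ1 : 1 < γ) (hγ2 : γ ≤ 2) (h : ℝ → ℝ)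
    (hsm : ContDiffOn ℝ (⊤ : ℕ∞) h (Set.Ioi R0))
    (hlim : Filter.Tendsto h atTop (nhds 0))
    (hasym : (fun r : ℝ => r ^ 2 * (1 - 2 * M / r) * deriv h r - C0 - C1 / r)
      =O[atTop] fun r : ℝ => r ^ (-γ)) :
    ((fun r : ℝ => deriv h r - C0 * r ^ (-(2 : ℝ)) - (C1 + 2 * M * C0) * r ^ (-(3 : ℝ)))
        =O[atTop] fun r : ℝ => r ^ (-γ - 2)) ∧
    ((fun r : ℝ => h r + C0 / r + (C1 + 2 * M * C0) / (2 * r ^ 2))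
        =O[atTop] fun r : ℝ => r ^ (-γ - 1)) ∧
    ((fun r : ℝ => r ^ 2 * deriv (fun s : ℝ => s * h s) r - (C1 + 2 * M * C0) / 2)
        =O[atTop] fun r : ℝ => r ^ (1 - γ)) := by
  have hR0pos : 0 < R0 := by linarith
  set A := C1 + 2 * M * C0 with hA
  set err1 : ℝ → ℝ := fun r => deriv h r - C0 * r ^ (-(2:ℝ)) - A * r ^ (-(3:ℝ)) with herr1def
  set e : ℝ → ℝ := fun r => h r + C0 / r + A / (2 * r ^ 2) with hedef
  have hdiff : ∀ r ∈ Set.Ioi R0, HasDerivAt h (deriv h r) r := fun r hr =>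
    ((hsm.contDiffAt (isOpen_Ioi.mem_nhds hr)).differentiableAt (by simp)).hasDerivAt
  -- ## Part 1
  have part1 : err1 =O[atTop] fun r : ℝ => r ^ (-γ - 2) := by
    have hsmall : (fun r : ℝ => 2 * M * A * r ^ (-(2:ℝ))) =O[atTop] fun r => r ^ (-γ) := by
      apply IsBigO.of_bound (|2 * M * A|)
      filter_upwards [eventually_ge_atTop (1:ℝ)] with r hr
      have hr0 : (0:ℝ) < r := lt_of_lt_of_le one_pos hr
      rw [Real.norm_eq_abs, Real.norm_eq_abs, abs_mul,
        abs_of_pos (Real.rpow_pos_of_pos hr0 _), abs_of_pos (Real.rpow_pos_of_pos hr0 _)]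
      have : r ^ (-(2:ℝ)) ≤ r ^ (-γ) :=
        Real.rpow_le_rpow_of_exponent_le hr (by linarith)
      nlinarith [abs_nonneg (2*M*A), Real.rpow_pos_of_pos hr0 (-(2:ℝ))]
    have hbig : (fun r : ℝ => r ^ 2 * (1 - 2 * M / r) * err1 r) =O[atTop]
        fun r => r ^ (-γ) := by
      apply (hasym.add hsmall).congr' _ EventuallyEq.rfl
      filter_upwards [eventually_gt_atTop (0:ℝ)] with r hr0
      have e2 : r ^ (-(2:ℝ)) = (r^2)⁻¹ := by
        rw [show (-(2:ℝ)) = -((2:ℕ):ℝ) by norm_num, rpow_neg_nat' r hr0]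
      have e3 : r ^ (-(3:ℝ)) = (r^3)⁻¹ := by
        rw [show (-(3:ℝ)) = -((3:ℕ):ℝ) by norm_num, rpow_neg_nat' r hr0]
      simp only [herr1def, hA, e2, e3]
      field_simp
      ring
    have hinv : (fun r : ℝ => (r ^ 2 * (1 - 2 * M / r))⁻¹) =O[atTop]
        fun r => r ^ (-(2:ℝ)) := by
      apply IsBigO.of_bound 2
      filter_upwards [eventually_ge_atTop (1:ℝ), eventually_ge_atTop (4*M)] with r hr1 hrM
      have hr0 : (0:ℝ) < r := lt_of_lt_of_le one_pos hr1
      have hD : (1:ℝ)/2 ≤ 1 - 2 * M / r := by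
        have : 2 * M / r ≤ 1/2 := by rw [div_le_iff₀ hr0]; nlinarith
        linarith
      have hDr : r^2/2 ≤ r ^ 2 * (1 - 2*M/r) := by nlinarith [sq_nonneg r]
      have hpos : (0:ℝ) < r ^ 2 * (1 - 2*M/r) := lt_of_lt_of_le (by positivity) hDr
      have e2 : r ^ (-(2:ℝ)) = (r^2)⁻¹ := by
        rw [show (-(2:ℝ)) = -((2:ℕ):ℝ) by norm_num, rpow_neg_nat' r hr0]
      rw [Real.norm_eq_abs, Real.norm_eq_abs, abs_of_pos (inv_pos.2 hpos),
        abs_of_pos (by rw [e2]; positivity : (0:ℝ) < r ^ (-(2:ℝ))), e2]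
      calc (r ^ 2 * (1 - 2*M/r))⁻¹ ≤ (r^2/2)⁻¹ := by
            apply inv_anti₀ (by positivity) hDr
        _ = 2 * (r^2)⁻¹ := by rw [inv_div]; ring
    apply (hbig.mul hinv).congr'
    · filter_upwards [eventually_ge_atTop (1:ℝ), eventually_ge_atTop (4*M)] with r hr1 hrM
      have hr0 : (0:ℝ) < r := lt_of_lt_of_le one_pos hr1
      have hne : r ^ 2 * (r - 2 * M) ≠ 0 := by
        have h1 : (0:ℝ) < r - 2*M := by nlinarith
        positivity
      field_simp
      exact mul_div_cancel_left₀ _ (by linarith : (0:ℝ) < r - 2 * M).ne'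
    · filter_upwards [eventually_gt_atTop (0:ℝ)] with r hr0
      rw [← Real.rpow_add hr0, sub_eq_add_neg]
  -- ## Part 2
  obtain ⟨c, hc⟩ := isBigO_iff.mp part1
  obtain ⟨a, ha⟩ := eventually_atTop.mp hc
  set R : ℝ := max (max R0 1) a with hRdef
  have hR0R : R0 ≤ R := le_trans (le_max_left _ _) (le_max_left _ _)
  have hRpos : (0:ℝ) < R := lt_of_lt_of_le hR0pos hR0R
  set C' : ℝ := max c 0 with hC'def
  have hC'2 : (0:ℝ) ≤ C' := le_max_right _ _
  have hIoi : Set.Ioi R ⊆ Set.Ioi R0 := fun x hx => lt_of_le_of_lt hR0R hx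
  have hd : ∀ r ∈ Set.Ioi R, HasDerivAt e (err1 r) r := by
    intro r hr
    have hr0 : (0:ℝ) < r := hRpos.trans hr
    have hdh : HasDerivAt h (deriv h r) r := hdiff r (hIoi hr)
    have h2 : HasDerivAt (fun s : ℝ => C0 / s) (-C0 / r ^ 2) r := by
      have := (hasDerivAt_inv hr0.ne').const_mul C0
      have heq : (fun s : ℝ => C0 / s) = fun s : ℝ => C0 * s⁻¹ := by
        funext s; rw [div_eq_mul_inv]
      rw [heq, show -C0 / r^2 = C0 * -(r^2)⁻¹ by field_simp]
      exact this
    have h3 : HasDerivAt (fun s : ℝ => A / (2 * s ^ 2)) (-A / r ^ 3) r := by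
      have hb : HasDerivAt (fun s : ℝ => 2 * s ^ 2) (2 * (2 * r ^ 1)) r :=
        (hasDerivAt_pow 2 r).const_mul 2
      have hne : (2 * r ^ 2 : ℝ) ≠ 0 := by positivity
      have := (hb.inv hne).const_mul A
      have heq : (fun s : ℝ => A / (2 * s ^ 2)) = fun s : ℝ => A * (2 * s ^ 2)⁻¹ := by
        funext s; rw [div_eq_mul_inv]
      rw [heq, show -A / r^3 = A * -(2 * (2 * r ^ 1)) / (2 * r ^ 2) ^ 2 by field_simp]
      exact this.congr_deriv (by ring)
    have := (hdh.add h2).add h3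
    have e2 : r ^ (-(2:ℝ)) = (r^2)⁻¹ := by
      rw [show (-(2:ℝ)) = -((2:ℕ):ℝ) by norm_num, rpow_neg_nat' r hr0]
    have e3 : r ^ (-(3:ℝ)) = (r^3)⁻¹ := by
      rw [show (-(3:ℝ)) = -((3:ℕ):ℝ) by norm_num, rpow_neg_nat' r hr0]
    simp only [herr1def, hedef]
    refine this.congr_deriv ?_
    rw [e2, e3]
    field_simp
    ring
  have hcont : ContinuousOn err1 (Set.Ioi R) := by
    have h1 : ContinuousOn (deriv h) (Set.Ioi R) :=
      (hsm.continuousOn_deriv_of_isOpen isOpen_Ioi (by simp)).mono hIoi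
    have h2 : ContinuousOn (fun r : ℝ => C0 * r ^ (-(2:ℝ))) (Set.Ioi R) := by
      apply ContinuousOn.mul continuousOn_const
      intro x hx
      exact (Real.continuousAt_rpow_const x _ (Or.inl (hRpos.trans hx).ne')).continuousWithinAt
    have h3 : ContinuousOn (fun r : ℝ => A * r ^ (-(3:ℝ))) (Set.Ioi R) := by
      apply ContinuousOn.mul continuousOn_const
      intro x hx
      exact (Real.continuousAt_rpow_const x _ (Or.inl (hRpos.trans hx).ne')).continuousWithinAt
    exact (h1.sub h2).sub h3
  have hlime : Filter.Tendsto e atTop (nhds 0) := by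
    have t1 : Filter.Tendsto (fun r : ℝ => C0 / r) atTop (nhds 0) :=
      tendsto_const_nhds.div_atTop tendsto_id
    have t2 : Filter.Tendsto (fun r : ℝ => A / (2 * r ^ 2)) atTop (nhds 0) :=
      tendsto_const_nhds.div_atTop ((tendsto_pow_atTop two_ne_zero).const_mul_atTop two_pos)
    simpa using (hlim.add t1).add t2
  have hb : ∀ r ∈ Set.Ioi R, |err1 r| ≤ C' * r ^ (-(γ + 2)) := by
    intro r hr
    have hr0 : (0:ℝ) < r := hRpos.trans hr
    have hra : a ≤ r := le_of_lt (lt_of_le_of_lt (le_max_right _ _) hr)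
    have := ha r hra
    rw [Real.norm_eq_abs, Real.norm_eq_abs,
      abs_of_pos (Real.rpow_pos_of_pos hr0 _)] at this
    calc |err1 r| ≤ c * r ^ (-γ - 2) := this
      _ ≤ C' * r ^ (-γ - 2) := by
          apply mul_le_mul_of_nonneg_right (le_max_left _ _)
          exact (Real.rpow_pos_of_pos hr0 _).le
      _ = C' * r ^ (-(γ + 2)) := by rw [show (-γ - 2 : ℝ) = -(γ + 2) by ring]
  have hbound := decay_of_deriv' (γ + 2) R C' (by linarith) hRpos hC'2 e err1
    hd hcont hlime hb
  have part2 : e =O[atTop] fun r : ℝ => r ^ (-γ - 1) := by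
    apply IsBigO.of_bound (C' / (γ + 2 - 1))
    filter_upwards [eventually_gt_atTop R] with r hr
    have hr0 : (0:ℝ) < r := hRpos.trans hr
    rw [Real.norm_eq_abs, Real.norm_eq_abs, abs_of_pos (Real.rpow_pos_of_pos hr0 _)]
    have := hbound r hr
    rwa [show (1 - (γ + 2) : ℝ) = -γ - 1 by ring] at this
  -- ## Part 3
  refine ⟨part1, part2, ?_⟩
  have hpow : ∀ n : ℕ, (fun r : ℝ => (r:ℝ) ^ n) =O[atTop] fun r : ℝ => r ^ ((n:ℝ)) := by
    intro n
    have : (fun r : ℝ => r ^ ((n:ℝ))) = fun r : ℝ => r ^ n := by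
      funext r; rw [Real.rpow_natCast]
    rw [this]
  have hterm1 : (fun r : ℝ => r ^ 2 * e r) =O[atTop] fun r : ℝ => r ^ (1 - γ) := by
    apply ((hpow 2).mul part2).congr' EventuallyEq.rfl
    filter_upwards [eventually_gt_atTop (0:ℝ)] with r hr0
    rw [← Real.rpow_add hr0, show ((2:ℕ) + (-γ - 1) : ℝ) = 1 - γ by push_cast; ring]
  have hterm2 : (fun r : ℝ => r ^ 3 * err1 r) =O[atTop] fun r : ℝ => r ^ (1 - γ) := by
    apply ((hpow 3).mul part1).congr' EventuallyEq.rfl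
    filter_upwards [eventually_gt_atTop (0:ℝ)] with r hr0
    rw [← Real.rpow_add hr0, show ((3:ℕ) + (-γ - 2) : ℝ) = 1 - γ by push_cast; ring]
  apply (hterm1.add hterm2).congr' _ EventuallyEq.rfl
  filter_upwards [eventually_gt_atTop R0] with r hr
  have hr0 : (0:ℝ) < r := hR0pos.trans hr
  have hdh : HasDerivAt h (deriv h r) r := hdiff r hr
  have hds : deriv (fun s : ℝ => s * h s) r = h r + r * deriv h r := by
    have hmul := (hasDerivAt_id r).mul hdh
    simp only [id_eq] at hmul
    rw [show (fun s : ℝ => s * h s) = id * h from rfl, hmul.deriv]; ring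
  have e2 : r ^ (-(2:ℝ)) = (r^2)⁻¹ := by
    rw [show (-(2:ℝ)) = -((2:ℕ):ℝ) by norm_num, rpow_neg_nat' r hr0]
  have e3 : r ^ (-(3:ℝ)) = (r^3)⁻¹ := by
    rw [show (-(3:ℝ)) = -((3:ℕ):ℝ) by norm_num, rpow_neg_nat' r hr0]
  simp only [herr1def, hedef, hds, e2, e3]
  field_simp
  ring
end
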